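/- Let G=(V,w,m) be a locally finite, connected weighted graph with Deg_max := sup_{x∈V} deg(x)/m(x) < ∞. Then for all vertices x₀, y₀ ∈ V, the combinatorial distance and the resistance distance satisfy d(x₀,y₀) ≤ √(Deg_max/2) · ρ(x₀,y₀). -/

import Mathlib

open Filter
open scoped ENNReal

variable {V : Type*}

/-- The degree `deg(x) = ∑_y w(x,y)` of a vertex in a locally finite weighted graph. -/
noncomputable def vertexDeg (w : V → V → ℝ) (x : V) : ℝ := ∑' y, w x y

/-- The normalized degree `Deg(x) = deg(x)/m(x)`. -/
noncomputable def nDeg (w : V → V → ℝ) (m : V → ℝ) (x : V) : ℝ := vertexDeg w x / m x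

/-- The graph Laplacian `Δf(x) = (1/m(x)) ∑_y w(x,y)(f(y) - f(x))`. -/
noncomputable def graphLap (w : V → V → ℝ) (m : V → ℝ) (f : V → ℝ) (x : V) : ℝ :=
  (1 / m x) * ∑' y, w x y * (f y - f x)

/-- The Bakry–Émery operator `Γ`, defined by `2Γ(f,g) = Δ(fg) - fΔg - gΔf`. -/
noncomputable def bakryGamma (w : V → V → ℝ) (m : V → ℝ) (f g : V → ℝ) (x : V) : ℝ :=
  (graphLap w m (fun z => f z * g z) x - f x * graphLap w m g x - g x * graphLap w m f x) / 2

/-- The carré du champ `Γf(x) = (1/(2m(x))) ∑_y w(x,y)(f(y) - f(x))²`, valued in `[0,∞]`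
so that it is meaningful (possibly infinite) for every function `f`. -/
noncomputable def carre (w : V → V → ℝ) (m : V → ℝ) (f : V → ℝ) (x : V) : ℝ≥0∞ :=
  (∑' y, ENNReal.ofReal (w x y * (f y - f x) ^ 2)) / ENNReal.ofReal (2 * m x)

/-- `p` is a walk of length `k` from `x` to `y` along edges of positive weight. -/
def IsWalk (w : V → V → ℝ) (x y : V) (k : ℕ) (p : ℕ → V) : Prop :=
  p 0 = x ∧ p k = y ∧ ∀ i < k, 0 < w (p i) (p (i + 1))

/-- Connectedness of a weighted graph: any two vertices are joined by a finite path of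
consecutive neighbors. -/
def GraphConnected (w : V → V → ℝ) : Prop := ∀ x y : V, ∃ k p, IsWalk w x y k p

/-- The combinatorial distance: the minimal length of a path of consecutive neighbors. -/
noncomputable def combDist (w : V → V → ℝ) (x y : V) : ℕ :=
  sInf {k : ℕ | ∃ p, IsWalk w x y k p}

/-- The resistance distance `ρ(x,y) = sup {|f(y) - f(x)| : ‖Γf‖_∞ ≤ 1}`. -/
noncomputable def resistDist (w : V → V → ℝ) (m : V → ℝ) (x y : V) : ℝ :=
  sSup {r : ℝ | ∃ f : V → ℝ, (∀ z, carre w m f z ≤ 1) ∧ r = |f y - f x|}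

/-- The maximal normalized degree `Deg_max = sup_x deg(x)/m(x)`. -/
noncomputable def nDegMax (w : V → V → ℝ) (m : V → ℝ) : ℝ :=
  sSup (Set.range fun x : V => nDeg w m x)


section Helpers

variable {w : V → V → ℝ} {m : V → ℝ}

lemma exists_min_walk (hconn : GraphConnected w) (x y : V) :
    ∃ p, IsWalk w x y (combDist w x y) p := by
  have h : {k : ℕ | ∃ p, IsWalk w x y k p}.Nonempty := by
    obtain ⟨k, p, hp⟩ := hconn x y; exact ⟨k, p, hp⟩
  exact Nat.sInf_mem h

lemma combDist_self (x : V) : combDist w x x = 0 := by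
  have : 0 ∈ {k : ℕ | ∃ p, IsWalk w x x k p} :=
    ⟨fun _ => x, rfl, rfl, fun i hi => absurd hi (Nat.not_lt_zero i)⟩
  exact Nat.le_zero.mp (Nat.sInf_le this)

lemma combDist_le_of_edge (hconn : GraphConnected w) {x u v : V} (huv : 0 < w u v) :
    combDist w x v ≤ combDist w x u + 1 := by
  obtain ⟨p, hp0, hpk, hpw⟩ := exists_min_walk hconn x u
  set k := combDist w x u with hk
  refine Nat.sInf_le ⟨fun i => if i ≤ k then p i else v, ?_, ?_, ?_⟩
  · simpa using hp0
  · simp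
  · intro i hi
    rcases Nat.lt_succ_iff_lt_or_eq.mp hi with h | h
    · have h1 : i ≤ k := le_of_lt h
      have h2 : i + 1 ≤ k := h
      simpa [h1, h2] using hpw i h
    · subst h
      simpa [Nat.not_succ_le_self, hpk] using huv

lemma carre_edge_bound {f : V → ℝ} {z : V} (hmz : 0 < m z)
    (h : carre w m f z ≤ 1) (y : V) :
    w z y * (f y - f z) ^ 2 ≤ 2 * m z := by
  have h2 : (0 : ℝ) < 2 * m z := by linarith
  have hne : ENNReal.ofReal (2 * m z) ≠ 0 := (ENNReal.ofReal_pos.mpr h2).ne'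
  have hne' : ENNReal.ofReal (2 * m z) ≠ ⊤ := ENNReal.ofReal_ne_top
  have hsum : (∑' y, ENNReal.ofReal (w z y * (f y - f z) ^ 2)) ≤ ENNReal.ofReal (2 * m z) := by
    have h' := h
    rw [carre, ENNReal.div_le_iff hne hne', one_mul] at h'
    exact h'
  have hterm := le_trans (ENNReal.le_tsum y) hsum
  rwa [ENNReal.ofReal_le_ofReal_iff h2.le] at hterm

lemma resist_set_bddAbove (hm : ∀ x, 0 < m x) (hconn : GraphConnected w) (x₀ y₀ : V) :
    BddAbove {r : ℝ | ∃ f : V → ℝ, (∀ z, carre w m f z ≤ 1) ∧ r = |f y₀ - f x₀|} := by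
  obtain ⟨p, hp0, hpk, hpw⟩ := exists_min_walk hconn x₀ y₀
  set k := combDist w x₀ y₀ with hk
  refine ⟨∑ i ∈ Finset.range k, Real.sqrt (2 * m (p i) / w (p i) (p (i + 1))), ?_⟩
  rintro r ⟨f, hf, rfl⟩
  calc |f y₀ - f x₀| = |∑ i ∈ Finset.range k, (f (p (i + 1)) - f (p i))| := by
        rw [Finset.sum_range_sub (fun i => f (p i)), hp0, hpk]
    _ ≤ ∑ i ∈ Finset.range k, |f (p (i + 1)) - f (p i)| := Finset.abs_sum_le_sum_abs _ _
    _ ≤ ∑ i ∈ Finset.range k, Real.sqrt (2 * m (p i) / w (p i) (p (i + 1))) := by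
        apply Finset.sum_le_sum
        intro i hi
        have hwi := hpw i (Finset.mem_range.mp hi)
        have hb := carre_edge_bound (hm (p i)) (hf (p i)) (p (i + 1))
        have hsq : (f (p (i + 1)) - f (p i)) ^ 2 ≤ 2 * m (p i) / w (p i) (p (i + 1)) := by
          rw [le_div_iff₀ hwi]
          nlinarith [hb]
        calc |f (p (i + 1)) - f (p i)|
            = Real.sqrt ((f (p (i + 1)) - f (p i)) ^ 2) := (Real.sqrt_sq_eq_abs _).symm
          _ ≤ _ := Real.sqrt_le_sqrt hsq

end Helpers

theorem combDist_le_resistDist [Countable V]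
    (w : V → V → ℝ) (m : V → ℝ)
    (hsymm : ∀ x y, w x y = w y x) (hnonneg : ∀ x y, 0 ≤ w x y)
    (hdiag : ∀ x, w x x = 0) (hm : ∀ x, 0 < m x)
    (hlocfin : ∀ x, Summable fun y => w x y)
    (hconn : GraphConnected w)
    (hDegmax : BddAbove (Set.range fun x : V => nDeg w m x))
    (x₀ y₀ : V) :
    (combDist w x₀ y₀ : ℝ) ≤ Real.sqrt (nDegMax w m / 2) * resistDist w m x₀ y₀ := by
  set ρ := resistDist w m x₀ y₀ with hρdef
  have hbdd := resist_set_bddAbove hm hconn x₀ y₀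
  have hzero : (0 : ℝ) ∈ {r : ℝ | ∃ f : V → ℝ, (∀ z, carre w m f z ≤ 1) ∧ r = |f y₀ - f x₀|} := by
    refine ⟨fun _ => 0, fun z => ?_, by simp⟩
    simp [carre]
  have hρ0 : 0 ≤ ρ := le_csSup hbdd hzero
  by_cases hD : combDist w x₀ y₀ = 0
  · rw [hD]
    exact_mod_cast mul_nonneg (Real.sqrt_nonneg _) hρ0
  -- main case
  have hD1 : 0 < combDist w x₀ y₀ := Nat.pos_of_ne_zero hD
  obtain ⟨p, hp0, hpk, hpw⟩ := exists_min_walk hconn x₀ y₀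
  have hw01 : 0 < w x₀ (p 1) := by
    have h := hpw 0 hD1
    rwa [hp0] at h
  have hdeg : 0 < vertexDeg w x₀ := by
    have hle : w x₀ (p 1) ≤ ∑' y, w x₀ y :=
      Summable.le_tsum (hlocfin x₀) (p 1) (fun y _ => hnonneg x₀ y)
    exact lt_of_lt_of_le hw01 hle
  have hDmax : 0 < nDegMax w m := by
    have h1 : nDeg w m x₀ ≤ nDegMax w m := le_csSup hDegmax ⟨x₀, rfl⟩
    have h2 : 0 < nDeg w m x₀ := div_pos hdeg (hm x₀)
    linarith
  set c : ℝ := Real.sqrt (2 / nDegMax w m) with hcdef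
  have hc0 : 0 ≤ c := Real.sqrt_nonneg _
  have hc2 : c ^ 2 = 2 / nDegMax w m := Real.sq_sqrt (by positivity)
  set f : V → ℝ := fun z => (combDist w x₀ z : ℝ) with hfdef
  -- Lipschitz bound on f along edges
  have hlip : ∀ z y : V, 0 < w z y → (f y - f z) ^ 2 ≤ 1 := by
    intro z y hwzy
    have h1 : combDist w x₀ y ≤ combDist w x₀ z + 1 := combDist_le_of_edge hconn hwzy
    have h2 : combDist w x₀ z ≤ combDist w x₀ y + 1 := by
      apply combDist_le_of_edge hconn
      rw [hsymm]; exact hwzy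
    have hb : |f y - f z| ≤ 1 := by
      rw [abs_sub_le_iff]
      have c1 : (combDist w x₀ y : ℝ) ≤ (combDist w x₀ z : ℝ) + 1 := by exact_mod_cast h1
      have c2 : (combDist w x₀ z : ℝ) ≤ (combDist w x₀ y : ℝ) + 1 := by exact_mod_cast h2
      constructor <;> · simp only [hfdef]; linarith
    nlinarith [sq_abs (f y - f z), hb, abs_nonneg (f y - f z)]
  set g : V → ℝ := fun z => c * f z with hgdef
  have hcar : ∀ z, carre w m g z ≤ 1 := by
    intro z
    have hmz := hm z
    have h2 : (0 : ℝ) < 2 * m z := by linarith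
    have hne : ENNReal.ofReal (2 * m z) ≠ 0 := (ENNReal.ofReal_pos.mpr h2).ne'
    have hne' : ENNReal.ofReal (2 * m z) ≠ ⊤ := ENNReal.ofReal_ne_top
    rw [carre, ENNReal.div_le_iff hne hne', one_mul]
    calc (∑' y, ENNReal.ofReal (w z y * (g y - g z) ^ 2))
        ≤ ∑' y, ENNReal.ofReal (c ^ 2 * w z y) := by
          apply ENNReal.tsum_le_tsum
          intro y
          apply ENNReal.ofReal_le_ofReal
          rcases eq_or_lt_of_le (hnonneg z y) with h | h
          · rw [← h]; simp
          · have hfy := hlip z y h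
            have : (g y - g z) ^ 2 = c ^ 2 * (f y - f z) ^ 2 := by
              simp only [hgdef]; ring
            rw [this]
            calc w z y * (c ^ 2 * (f y - f z) ^ 2) ≤ w z y * (c ^ 2 * 1) := by
                  apply mul_le_mul_of_nonneg_left _ (hnonneg z y)
                  exact mul_le_mul_of_nonneg_left hfy (by positivity)
              _ = c ^ 2 * w z y := by ring
      _ = ENNReal.ofReal (c ^ 2) * ∑' y, ENNReal.ofReal (w z y) := by
          rw [← ENNReal.tsum_mul_left]
          congr 1; funext y
          rw [← ENNReal.ofReal_mul (by positivity)]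
      _ = ENNReal.ofReal (c ^ 2 * vertexDeg w z) := by
          rw [← ENNReal.ofReal_tsum_of_nonneg (hnonneg z) (hlocfin z),
            ← ENNReal.ofReal_mul (by positivity)]
          rfl
      _ ≤ ENNReal.ofReal (2 * m z) := by
          apply ENNReal.ofReal_le_ofReal
          have h1 : nDeg w m z ≤ nDegMax w m := le_csSup hDegmax ⟨z, rfl⟩
          have h2' : vertexDeg w z ≤ nDegMax w m * m z := by
            rw [nDeg, div_le_iff₀ (hm z)] at h1
            exact h1
          rw [hc2]
          calc 2 / nDegMax w m * vertexDeg w z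
              ≤ 2 / nDegMax w m * (nDegMax w m * m z) := by
                apply mul_le_mul_of_nonneg_left h2' (by positivity)
            _ = 2 * m z := by field_simp
  have hmem : c * (combDist w x₀ y₀ : ℝ)
      ∈ {r : ℝ | ∃ f : V → ℝ, (∀ z, carre w m f z ≤ 1) ∧ r = |f y₀ - f x₀|} := by
    refine ⟨g, hcar, ?_⟩
    have hx : f x₀ = 0 := by simp [hfdef, combDist_self]
    have hy : f y₀ = (combDist w x₀ y₀ : ℝ) := rfl
    rw [hgdef]
    simp only [hx, hy, mul_zero, sub_zero]
    rw [abs_of_nonneg (by positivity)]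
  have hρge : c * (combDist w x₀ y₀ : ℝ) ≤ ρ := le_csSup hbdd hmem
  have hkey : Real.sqrt (nDegMax w m / 2) * c = 1 := by
    rw [hcdef, ← Real.sqrt_mul (by positivity)]
    have : nDegMax w m / 2 * (2 / nDegMax w m) = 1 := by field_simp
    rw [this, Real.sqrt_one]
  calc (combDist w x₀ y₀ : ℝ)
      = Real.sqrt (nDegMax w m / 2) * c * (combDist w x₀ y₀ : ℝ) := by rw [hkey, one_mul]
    _ = Real.sqrt (nDegMax w m / 2) * (c * (combDist w x₀ y₀ : ℝ)) := by ring
    _ ≤ Real.sqrt (nDegMax w m / 2) * ρ :=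
        mul_le_mul_of_nonneg_left hρge (Real.sqrt_nonneg _)
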